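/- If T: E → F is an almost interval preserving operator between Banach lattices and A is an almost limited subset of E, then T(A) is an almost limited subset of F. -/

import Mathlib

open Filter Topology Pointwise

variable {E F G X : Type*}

section Defs

variable [NormedAddCommGroup E] [Lattice E] [IsOrderedAddMonoid E] [HasSolidNorm E] [NormedSpace ℝ E]

/-- `|f|` of a functional evaluated at `x ≥ 0`: `sup {f y : |y| ≤ x}`. -/
noncomputable def absEval (f : E →L[ℝ] ℝ) (x : E) : ℝ :=
  ⨆ y : {y : E // |y| ≤ x}, f y.1

/-- `|f| ⊓ |g| = 0` in the dual lattice, via the Riesz-Kantorovich formula. -/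
def DisjointPair (f g : E →L[ℝ] ℝ) : Prop :=
  ∀ x : E, 0 ≤ x →
    (⨅ y : {y : E // 0 ≤ y ∧ y ≤ x}, (absEval f y.1 + absEval g (x - y.1))) = 0

/-- A pairwise disjoint sequence of functionals. -/
def DisjointSeqDual (f : ℕ → E →L[ℝ] ℝ) : Prop :=
  ∀ n m, n ≠ m → DisjointPair (f n) (f m)

/-- A weakly null sequence in a normed space. -/
def WeaklyNullSeq {Y : Type*} [NormedAddCommGroup Y] [NormedSpace ℝ Y] (y : ℕ → Y) : Prop :=
  ∀ φ : Y →L[ℝ] ℝ, Tendsto (fun n => φ (y n)) atTop (𝓝 0)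

/-- An almost Dunford-Pettis set: disjoint weakly null sequences in the dual converge
uniformly to zero on it. -/
def AlmostDPSet (A : Set E) : Prop :=
  ∀ f : ℕ → E →L[ℝ] ℝ, DisjointSeqDual f → WeaklyNullSeq f →
    Tendsto (fun n => ⨆ a : A, |f n a.1|) atTop (𝓝 0)

end Defs

variable [NormedAddCommGroup E] [Lattice E] [IsOrderedAddMonoid E] [HasSolidNorm E] [NormedSpace ℝ E]
  [NormedAddCommGroup F] [Lattice F] [IsOrderedAddMonoid F] [HasSolidNorm F] [NormedSpace ℝ F] in
/-- An almost interval preserving operator: positive, with `T[0,x]` dense in `[0,Tx]`. -/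
def AlmostIntervalPreserving (T : E →L[ℝ] F) : Prop :=
  (∀ x : E, 0 ≤ x → 0 ≤ T x) ∧
    ∀ x : E, 0 ≤ x → Set.Icc (0 : F) (T x) ⊆ closure (T '' Set.Icc 0 x)

variable [NormedAddCommGroup E] [Lattice E] [IsOrderedAddMonoid E] [HasSolidNorm E] [NormedSpace ℝ E] in
/-- A weak* null sequence of functionals. -/
def WeakStarNull (f : ℕ → E →L[ℝ] ℝ) : Prop :=
  ∀ x : E, Tendsto (fun n => f n x) atTop (𝓝 0)

variable [NormedAddCommGroup E] [Lattice E] [IsOrderedAddMonoid E] [HasSolidNorm E] [NormedSpace ℝ E] in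
/-- An almost limited set: disjoint weak* null sequences in the dual converge uniformly
to zero on it. -/
def AlmostLimitedSet (A : Set E) : Prop :=
  ∀ f : ℕ → E →L[ℝ] ℝ, DisjointSeqDual f → WeakStarNull f →
    Tendsto (fun n => ⨆ a : A, |f n a.1|) atTop (𝓝 0)

/-!
Pulling back along `T` preserves weak* nullity of functionals, so the point is that it also
preserves disjointness. If `|f| ⊓ |g| = 0`, the Riesz–Kantorovich formula gives `v ∈ [0, Tx]`
with `|f| v + |g| (Tx - v)` small. Since `T[0, x]` is dense in `[0, Tx]`, `v` can be replaced
by some `Ty` with `y ∈ [0, x]` at a cost of `(‖f‖ + ‖g‖) ‖v - Ty‖`, and positivity of `T` gives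
`|f ∘ T| y ≤ |f| (Ty)`; so `|f ∘ T| ⊓ |g ∘ T| = 0`. The supremum of `|fₙ|` over `T(A)` is
the supremum of `|fₙ ∘ T|` over `A`, which tends to zero because `A` is almost limited.
-/

/-- Riesz decomposition, with `z` clamped to `[-a, a]` as the first part. -/
theorem exists_abs_le_and_abs_sub_le_of_abs_le_add {α : Type*} [AddCommGroup α] [Lattice α]
    [IsOrderedAddMonoid α] {z a b : α} (ha : 0 ≤ a) (hb : 0 ≤ b) (hz : |z| ≤ a + b) :
    ∃ z₁, |z₁| ≤ a ∧ |z - z₁| ≤ b := by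
  obtain ⟨hle, hge⟩ := abs_le'.mp hz
  refine ⟨(z ⊔ -a) ⊓ a,
    abs_le'.mpr ⟨inf_le_right, neg_le.mp (le_inf le_sup_right (neg_le_self ha))⟩,
    abs_le'.mpr ⟨?_, ?_⟩⟩
  · rw [sub_le_iff_le_add', inf_add, sup_add]
    exact le_inf (le_sup_of_le_left (le_add_of_nonneg_right hb)) hle
  · rw [neg_sub, sub_le_iff_le_add]
    refine inf_le_left.trans (sup_le (le_add_of_nonneg_left hb) ?_)
    rw [← sub_le_iff_le_add', sub_eq_add_neg, ← neg_add]
    exact neg_le.mp hge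

section AbsEval

variable [NormedAddCommGroup E] [Lattice E] [HasSolidNorm E] [NormedSpace ℝ E]

theorem apply_le_opNorm_mul_of_abs_le (f : E →L[ℝ] ℝ) {x y : E} (h : |y| ≤ x) :
    f y ≤ ‖f‖ * ‖x‖ :=
  calc f y ≤ ‖f y‖ := le_abs_self _
    _ ≤ ‖f‖ * ‖y‖ := f.le_opNorm y
    _ ≤ ‖f‖ * ‖x‖ := by
      gcongr
      exact norm_le_norm_of_abs_le_abs (h.trans (le_abs_self x))

theorem absEval_bddAbove (f : E →L[ℝ] ℝ) (x : E) :
    BddAbove (Set.range fun y : {y : E // |y| ≤ x} => f y.1) :=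
  ⟨‖f‖ * ‖x‖, by rintro _ ⟨y, rfl⟩; exact apply_le_opNorm_mul_of_abs_le f y.2⟩

theorem absEval_le_opNorm_mul (f : E →L[ℝ] ℝ) (x : E) : absEval f x ≤ ‖f‖ * ‖x‖ :=
  Real.iSup_le (fun y => apply_le_opNorm_mul_of_abs_le f y.2) (by positivity)

theorem le_absEval (f : E →L[ℝ] ℝ) {x y : E} (h : |y| ≤ x) : f y ≤ absEval f x :=
  le_ciSup (absEval_bddAbove f x) ⟨y, h⟩

variable [IsOrderedAddMonoid E]

theorem absEval_nonneg (f : E →L[ℝ] ℝ) {x : E} (hx : 0 ≤ x) : 0 ≤ absEval f x := by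
  simpa using le_absEval f (y := 0) (by simpa using hx)

theorem absEval_mono (f : E →L[ℝ] ℝ) {a b : E} (hb : 0 ≤ b) (hab : a ≤ b) :
    absEval f a ≤ absEval f b :=
  Real.iSup_le (fun y => le_absEval f (y.2.trans hab)) (absEval_nonneg f hb)

theorem absEval_add_le (f : E →L[ℝ] ℝ) {a b : E} (ha : 0 ≤ a) (hb : 0 ≤ b) :
    absEval f (a + b) ≤ absEval f a + absEval f b := by
  refine Real.iSup_le (fun z => ?_) (add_nonneg (absEval_nonneg f ha) (absEval_nonneg f hb))
  obtain ⟨z₁, hz₁, hz₂⟩ := exists_abs_le_and_abs_sub_le_of_abs_le_add ha hb z.2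
  calc f z = f z₁ + f (z - z₁) := by rw [← map_add, add_sub_cancel]
    _ ≤ absEval f a + absEval f b := add_le_add (le_absEval f hz₁) (le_absEval f hz₂)

theorem absEval_le_add_opNorm_mul_norm_sub (f : E →L[ℝ] ℝ) {v : E} (hv : 0 ≤ v) (w : E) :
    absEval f w ≤ absEval f v + ‖f‖ * ‖w - v‖ :=
  calc absEval f w ≤ absEval f (v + |w - v|) :=
        absEval_mono f (add_nonneg hv (abs_nonneg _)) (le_add_of_sub_left_le (le_abs_self _))
    _ ≤ absEval f v + absEval f |w - v| := absEval_add_le f hv (abs_nonneg _)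
    _ ≤ absEval f v + ‖f‖ * ‖w - v‖ := by
      rw [← norm_abs_eq_norm (w - v)]
      exact add_le_add_right (absEval_le_opNorm_mul f _) _

end AbsEval

variable [NormedAddCommGroup E] [Lattice E] [IsOrderedAddMonoid E] [NormedSpace ℝ E]
  [NormedAddCommGroup F] [Lattice F] [IsOrderedAddMonoid F] [HasSolidNorm F] [NormedSpace ℝ F] in
theorem absEval_comp_le {T : E →L[ℝ] F} (hT : ∀ x : E, 0 ≤ x → 0 ≤ T x)
    (f : F →L[ℝ] ℝ) {x : E} (hx : 0 ≤ x) :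
    absEval (f.comp T) x ≤ absEval f (T x) := by
  refine Real.iSup_le (fun y => le_absEval f (abs_le'.mpr ⟨?_, ?_⟩)) (absEval_nonneg f (hT x hx))
  · simpa using hT _ (sub_nonneg.mpr (abs_le'.mp y.2).1)
  · exact neg_le_iff_add_nonneg'.mpr
      (by simpa using hT _ (neg_le_iff_add_nonneg'.mp (abs_le'.mp y.2).2))

variable [NormedAddCommGroup E] [Lattice E] [IsOrderedAddMonoid E] [HasSolidNorm E]
  [NormedSpace ℝ E] in
theorem disjointPair_iff {f g : E →L[ℝ] ℝ} :
    DisjointPair f g ↔ ∀ x : E, 0 ≤ x → ∀ ε > 0,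
      ∃ y, 0 ≤ y ∧ y ≤ x ∧ absEval f y + absEval g (x - y) < ε := by
  refine forall₂_congr fun x hx => ?_
  have hnonneg : ∀ y : {y : E // 0 ≤ y ∧ y ≤ x},
      0 ≤ absEval f y.1 + absEval g (x - y.1) := fun y =>
    add_nonneg (absEval_nonneg f y.2.1) (absEval_nonneg g (sub_nonneg.mpr y.2.2))
  have hbdd : BddBelow (Set.range fun y : {y : E // 0 ≤ y ∧ y ≤ x} =>
      absEval f y.1 + absEval g (x - y.1)) := ⟨0, by rintro _ ⟨y, rfl⟩; exact hnonneg y⟩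
  have : Nonempty {y : E // 0 ≤ y ∧ y ≤ x} := ⟨⟨0, le_rfl, hx⟩⟩
  constructor
  · intro h ε hε
    obtain ⟨y, hy⟩ := exists_lt_of_ciInf_lt (h.trans_lt hε)
    exact ⟨y.1, y.2.1, y.2.2, hy⟩
  · intro h
    refine le_antisymm (le_of_forall_pos_lt_add fun ε hε => ?_) (Real.iInf_nonneg hnonneg)
    obtain ⟨y, hy0, hyx, hy⟩ := h ε hε
    exact (ciInf_le hbdd ⟨y, hy0, hyx⟩).trans_lt (by simpa using hy)

variable [NormedAddCommGroup E] [Lattice E] [IsOrderedAddMonoid E] [HasSolidNorm E]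
  [NormedSpace ℝ E] [NormedAddCommGroup F] [Lattice F] [IsOrderedAddMonoid F] [HasSolidNorm F]
  [NormedSpace ℝ F] in
theorem DisjointPair.comp {T : E →L[ℝ] F} (hT : AlmostIntervalPreserving T)
    {f g : F →L[ℝ] ℝ} (hfg : DisjointPair f g) :
    DisjointPair (f.comp T) (g.comp T) := by
  rw [disjointPair_iff] at hfg ⊢
  intro x hx ε hε
  obtain ⟨v, hv0, hvx, hv⟩ := hfg (T x) (hT.1 x hx) (ε / 2) (half_pos hε)
  have hC : 0 < ‖f‖ + ‖g‖ + 1 := by positivity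
  obtain ⟨_, ⟨y, hy, rfl⟩, hdist⟩ := Metric.mem_closure_iff.mp (hT.2 x hx ⟨hv0, hvx⟩)
    (ε / 2 / (‖f‖ + ‖g‖ + 1)) (by positivity)
  rw [lt_div_iff₀ hC, dist_eq_norm] at hdist
  refine ⟨y, hy.1, hy.2, ?_⟩
  calc absEval (f.comp T) y + absEval (g.comp T) (x - y)
      ≤ absEval f (T y) + absEval g (T x - T y) := by
        rw [← map_sub]
        exact add_le_add (absEval_comp_le hT.1 f hy.1)
          (absEval_comp_le hT.1 g (sub_nonneg.2 hy.2))
    _ ≤ absEval f v + ‖f‖ * ‖T y - v‖ + (absEval g (T x - v) + ‖g‖ * ‖T x - T y - (T x - v)‖) :=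
        add_le_add (absEval_le_add_opNorm_mul_norm_sub f hv0 _)
          (absEval_le_add_opNorm_mul_norm_sub g (sub_nonneg.2 hvx) _)
    _ = absEval f v + absEval g (T x - v) + (‖f‖ + ‖g‖) * ‖v - T y‖ := by
        rw [sub_sub_sub_cancel_left, norm_sub_rev (T y)]
        ring
    _ < ε := by nlinarith [norm_nonneg (v - T y)]

theorem almostIntervalPreserving_image_almostLimited_general [NormedAddCommGroup E] [Lattice E] [IsOrderedAddMonoid E] [HasSolidNorm E] [NormedSpace ℝ E] [NormedAddCommGroup F] [Lattice F] [IsOrderedAddMonoid F] [HasSolidNorm F] [NormedSpace ℝ F]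
    (T : E →L[ℝ] F) (hT : AlmostIntervalPreserving T)
    (A : Set E) (hA : AlmostLimitedSet A) : AlmostLimitedSet (T '' A) := by
  intro f hdisj hnull
  have hlim := hA (fun n => (f n).comp T) (fun n m hnm => (hdisj n m hnm).comp hT)
    (fun x => hnull (T x))
  convert hlim using 2 with n
  exact (Set.imageFactorization_surjective.iSup_comp fun b : T '' A => |f n b.1|).symm

/-- Almost interval preserving operators map almost limited sets to almost limited sets. -/
theorem almostIntervalPreserving_image_almostLimited [NormedAddCommGroup E] [Lattice E] [IsOrderedAddMonoid E] [HasSolidNorm E] [NormedSpace ℝ E] [PosSMulStrictMono ℝ E] [PosSMulReflectLT ℝ E] [CompleteSpace E] [NormedAddCommGroup F] [Lattice F] [IsOrderedAddMonoid F] [HasSolidNorm F] [NormedSpace ℝ F] [PosSMulStrictMono ℝ F] [PosSMulReflectLT ℝ F] [CompleteSpace F]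
    (T : E →L[ℝ] F) (hT : AlmostIntervalPreserving T)
    (A : Set E) (hA : AlmostLimitedSet A) : AlmostLimitedSet (T '' A) :=
  almostIntervalPreserving_image_almostLimited_general T hT A hA
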